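/- arXiv:1210.6722 — 2 statements merged into one kernel-verified Lean document; each statement's English description precedes it below -/
import Mathlib

section
/- Let B, U be bases of F_q^n and I ⊆ {1,...,n} nonempty. The minimum distance of the dual code C^⊥(B,I) of C(B,I) = span{b_i : i ∈ I} satisfies d(C^⊥(B,I)) ≥ min{μ̄^OWB_{(B,U)}(l) : l ∉ I} ≥ min{μ̄^WB_{(B,U)}(l) : l ∉ I}. -/
def Lspan (F : Type*) [Field F] {n : ℕ} (b : Fin n → Fin n → F) (l : ℕ) :
    Submodule F (Fin n → F) :=
  Submodule.span F (b '' {i | (i : ℕ) < l})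

noncomputable def rho (F : Type*) [Field F] {n : ℕ} (b : Fin n → Fin n → F)
    (v : Fin n → F) : ℕ :=
  sInf {l | v ∈ Lspan F b l}

def IsBasisFam (F : Type*) [Field F] {n : ℕ} (b : Fin n → Fin n → F) : Prop :=
  LinearIndependent F b ∧ Submodule.span F (Set.range b) = ⊤

def WB (F : Type*) [Field F] {n : ℕ} (b u : Fin n → Fin n → F) (i j : Fin n) : Prop :=
  ∀ i' j' : Fin n, i' ≤ i → j' ≤ j → (i', j') ≠ (i, j) →
    rho F b (b i' * u j') < rho F b (b i * u j)

def WWB (F : Type*) [Field F] {n : ℕ} (b u : Fin n → Fin n → F) (i j : Fin n) : Prop :=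
  (∀ i' : Fin n, i' < i → rho F b (b i' * u j) < rho F b (b i * u j)) ∧
  (∀ j' : Fin n, j' < j → rho F b (b i * u j') < rho F b (b i * u j))

def OWB (F : Type*) [Field F] {n : ℕ} (b u : Fin n → Fin n → F) (i j : Fin n) : Prop :=
  ∀ i' : Fin n, i' < i → rho F b (b i' * u j) < rho F b (b i * u j)

def LambdaWB (F : Type*) [Field F] {n : ℕ} (b u : Fin n → Fin n → F) (i : Fin n) : Set ℕ :=
  {l | ∃ j : Fin n, WB F b u i j ∧ rho F b (b i * u j) = l}

def LambdaOWB (F : Type*) [Field F] {n : ℕ} (b u : Fin n → Fin n → F) (i : Fin n) : Set ℕ :=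
  {l | ∃ j : Fin n, OWB F b u i j ∧ rho F b (b i * u j) = l}

noncomputable def sigmaWB (F : Type*) [Field F] {n : ℕ} (b u : Fin n → Fin n → F)
    (i : Fin n) : ℕ :=
  (LambdaWB F b u i).ncard

noncomputable def sigmaOWB (F : Type*) [Field F] {n : ℕ} (b u : Fin n → Fin n → F)
    (i : Fin n) : ℕ :=
  (LambdaOWB F b u i).ncard

def VWB (F : Type*) [Field F] {n : ℕ} (b u : Fin n → Fin n → F) (l : ℕ) : Set (Fin n) :=
  {i | ∃ j : Fin n, WB F b u i j ∧ rho F b (b i * u j) = l}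

def VOWB (F : Type*) [Field F] {n : ℕ} (b u : Fin n → Fin n → F) (l : ℕ) : Set (Fin n) :=
  {i | ∃ j : Fin n, OWB F b u i j ∧ rho F b (b i * u j) = l}

noncomputable def muWB (F : Type*) [Field F] {n : ℕ} (b u : Fin n → Fin n → F)
    (l : ℕ) : ℕ :=
  (VWB F b u l).ncard

noncomputable def muOWB (F : Type*) [Field F] {n : ℕ} (b u : Fin n → Fin n → F)
    (l : ℕ) : ℕ :=
  (VOWB F b u l).ncard

noncomputable def hwt {F : Type*} [Field F] {n : ℕ} (v : Fin n → F) : ℕ :=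
  Set.ncard {i | v i ≠ 0}

/-!
Let `c ≠ 0` be orthogonal to `C(B, I)` and let `l` be the first index with `b l ⬝ᵥ c ≠ 0`, so
`l ∉ I`. For each `i` counted by `μ̄^OWB(l + 1)` choose `j i` with `(i, j i)` OWB and
`ρ̄(b i * u (j i)) = l + 1`. The pairings `b i ⬝ᵥ (u (j i') * c) = (b i * u (j i')) ⬝ᵥ c` form a
triangular matrix with nonzero diagonal: on the diagonal the leading basis vector of
`b i * u (j i)` is `b l`, and for `i < i'` OWB puts `b i * u (j i')` into the span of
`b 0, …, b (l - 1)`, which is orthogonal to `c`. So the vectors `u (j i) * c`, all supported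
on the support of `c`, are linearly independent, and there are at most `wt(c)` of them.
Finally WB implies OWB, so `μ̄^WB ≤ μ̄^OWB` pointwise.
-/

open Matrix Module Submodule

theorem LinearIndependent.of_triangular_dual {R M ι : Type*} [CommRing R] [IsDomain R]
    [AddCommGroup M] [Module R M] [Fintype ι] [LinearOrder ι] {w : ι → M} (f : ι → Dual R M)
    (hdiag : ∀ i, f i (w i) ≠ 0) (htri : ∀ i i', i < i' → f i (w i') = 0) :
    LinearIndependent R w := by
  let A : Matrix ι ι R := Matrix.of fun i' i => f i (w i')
  have hA : A.IsUpperTriangular := fun i' i h => htri i i' h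
  have hdet : A.det ≠ 0 := by
    rw [det_of_isUpperTriangular hA]
    exact Finset.prod_ne_zero_iff.mpr fun i _ => hdiag i
  exact .of_comp (LinearMap.pi f) (linearIndependent_rows_of_det_ne_zero hdet)

theorem mul_dotProduct_eq_dotProduct_mul {R ι : Type*} [CommSemiring R] [Fintype ι]
    (x y z : ι → R) : (x * y) ⬝ᵥ z = x ⬝ᵥ (y * z) := by
  simp only [dotProduct, Pi.mul_apply, mul_assoc]

theorem dotProduct_eq_zero_of_mem_span {R ι : Type*} [CommSemiring R] [Fintype ι]
    {s : Set (ι → R)} {c : ι → R} (h : ∀ v ∈ s, v ⬝ᵥ c = 0) {x : ι → R} (hx : x ∈ span R s) :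
    x ⬝ᵥ c = 0 :=
  span_le (p := LinearMap.ker ((dotProductBilin R R).flip c)) |>.mpr h hx

theorem card_le_hwt_of_linearIndependent_mul {F ι : Type*} [Field F] [Fintype ι] {n : ℕ}
    {x : ι → Fin n → F} {c : Fin n → F} (h : LinearIndependent F fun i => x i * c) :
    Fintype.card ι ≤ hwt c := by
  classical
  have hrange : span F (Set.range fun i => x i * c) ≤ LinearMap.range (diagonal c).mulVecLin := by
    rw [span_le]
    rintro _ ⟨i, rfl⟩
    exact ⟨x i, funext fun k => by simp [mulVec_diagonal, mul_comm]⟩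
  calc Fintype.card ι = finrank F (span F (Set.range fun i => x i * c)) :=
        (finrank_span_eq_card h).symm
    _ ≤ (diagonal c).rank := finrank_mono hrange
    _ = hwt c := by
        rw [rank_diagonal, hwt, ← Nat.card_coe_set_eq, Nat.card_eq_fintype_card]
        rfl

theorem Nat.sInf_le_sInf_of_forall_le {α : Type*} {p : α → Prop} {f g : α → ℕ}
    (h : ∀ a, f a ≤ g a) :
    sInf {m | ∃ a, p a ∧ m = f a} ≤ sInf {m | ∃ a, p a ∧ m = g a} := by
  rcases Set.eq_empty_or_nonempty {m | ∃ a, p a ∧ m = g a} with hg | hg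
  · have hf : {m | ∃ a, p a ∧ m = f a} = ∅ :=
      Set.eq_empty_of_forall_notMem fun _ ⟨a, ha, _⟩ => hg.subset ⟨a, ha, rfl⟩
    rw [hf, Nat.sInf_empty]
    exact Nat.zero_le _
  · obtain ⟨a, ha, hmin⟩ := Nat.sInf_mem hg
    rw [hmin]
    exact (Nat.sInf_le (s := {m | ∃ a, p a ∧ m = f a}) ⟨a, ha, rfl⟩).trans (h a)

section Filtration

variable {F : Type*} [Field F] {n : ℕ} {b : Fin n → Fin n → F}

theorem Lspan_mono {l l' : ℕ} (h : l ≤ l') : Lspan F b l ≤ Lspan F b l' :=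
  span_mono (Set.image_mono fun _ hi => lt_of_lt_of_le hi h)

theorem Lspan_succ (l : Fin n) : Lspan F b (l + 1) = F ∙ b l ⊔ Lspan F b l := by
  have hidx : {i : Fin n | (i : ℕ) < l + 1} = insert l {i : Fin n | (i : ℕ) < l} := by
    ext i
    simp only [Set.mem_ofPred_eq, Set.mem_insert_iff, Nat.lt_succ_iff_lt_or_eq, Fin.ext_iff]
    tauto
  rw [Lspan, hidx, Set.image_insert_eq, span_insert, Lspan]

theorem Lspan_eq_top (hb : span F (Set.range b) = ⊤) : Lspan F b n = ⊤ := by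
  rw [Lspan, ← hb, ← Set.image_univ]
  congr
  ext i
  simp

theorem rho_le_iff (hb : span F (Set.range b) = ⊤) {v : Fin n → F} {l : ℕ} :
    rho F b v ≤ l ↔ v ∈ Lspan F b l :=
  ⟨fun h => Lspan_mono h (Nat.sInf_mem (s := {l | v ∈ Lspan F b l})
    ⟨n, by rw [Set.mem_ofPred_eq, Lspan_eq_top hb]; exact mem_top⟩), fun h => Nat.sInf_le h⟩

theorem dotProduct_eq_zero_of_rho_le (hb : span F (Set.range b) = ⊤) {c : Fin n → F} {l : ℕ}
    (hzero : ∀ i : Fin n, (i : ℕ) < l → b i ⬝ᵥ c = 0) {x : Fin n → F} (hx : rho F b x ≤ l) :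
    x ⬝ᵥ c = 0 := by
  refine dotProduct_eq_zero_of_mem_span ?_ ((rho_le_iff hb).mp hx)
  rintro _ ⟨i, hi, rfl⟩
  exact hzero i hi

theorem dotProduct_ne_zero_of_rho_eq_succ (hb : span F (Set.range b) = ⊤) {c : Fin n → F}
    {l : Fin n} (hl : b l ⬝ᵥ c ≠ 0) (hzero : ∀ i < l, b i ⬝ᵥ c = 0) {x : Fin n → F}
    (hx : rho F b x = l + 1) : x ⬝ᵥ c ≠ 0 := by
  have hmem := (rho_le_iff hb).mp hx.le
  rw [Lspan_succ, mem_sup] at hmem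
  obtain ⟨_, hy, z, hz, rfl⟩ := hmem
  obtain ⟨a, rfl⟩ := mem_span_singleton.mp hy
  have hzc : z ⬝ᵥ c = 0 := dotProduct_eq_zero_of_rho_le hb hzero ((rho_le_iff hb).mpr hz)
  have ha : a ≠ 0 := by
    rintro rfl
    rw [zero_smul, zero_add] at hx
    exact absurd ((rho_le_iff hb).mpr hz) (by omega)
  rw [add_dotProduct, smul_dotProduct, hzc, add_zero, smul_eq_mul]
  exact mul_ne_zero ha hl

end Filtration

section FengRao

variable {F : Type*} [Field F] {n : ℕ} {b : Fin n → Fin n → F}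

theorem exists_first_dotProduct_ne_zero (hb : span F (Set.range b) = ⊤) {c : Fin n → F}
    (hc : c ≠ 0) : ∃ l, b l ⬝ᵥ c ≠ 0 ∧ ∀ i < l, b i ⬝ᵥ c = 0 := by
  have hex : ∃ i, b i ⬝ᵥ c ≠ 0 := by
    by_contra! h
    refine hc (dotProduct_eq_zero c fun w => ?_)
    have hw : w ∈ span F (Set.range b) := hb ▸ mem_top
    rw [dotProduct_comm]
    exact dotProduct_eq_zero_of_mem_span (by rintro _ ⟨i, rfl⟩; exact h i) hw
  obtain ⟨l, hl, hmin⟩ := wellFounded_lt.has_min _ hex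
  exact ⟨l, hl, fun i hi => by_contra fun h => hmin i h hi⟩

theorem muOWB_succ_le_hwt (u : Fin n → Fin n → F) (hb : span F (Set.range b) = ⊤)
    {c : Fin n → F} {l : Fin n} (hl : b l ⬝ᵥ c ≠ 0) (hzero : ∀ i < l, b i ⬝ᵥ c = 0) :
    muOWB F b u (l + 1) ≤ hwt c := by
  set V := VOWB F b u (l + 1)
  have : Fintype V := Fintype.ofFinite V
  choose j hjOWB hjrho using fun i : V => i.2
  have hli : LinearIndependent F fun i : V => u (j i) * c := by
    refine .of_triangular_dual (fun i : V => dotProductBilin F F (b i)) (fun i => ?_)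
      (fun i i' hlt => ?_)
    · simpa only [dotProductBilin_apply_apply, ← mul_dotProduct_eq_dotProduct_mul] using
        dotProduct_ne_zero_of_rho_eq_succ hb hl hzero (hjrho i)
    · simp only [dotProductBilin_apply_apply, ← mul_dotProduct_eq_dotProduct_mul]
      exact dotProduct_eq_zero_of_rho_le hb hzero
        (Nat.le_of_lt_succ ((hjOWB i' i hlt).trans_eq (hjrho i')))
  calc muOWB F b u (l + 1) = Fintype.card V := by
        rw [muOWB, ← Nat.card_coe_set_eq, Nat.card_eq_fintype_card]
    _ ≤ hwt c := card_le_hwt_of_linearIndependent_mul hli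

theorem WB.owb {u : Fin n → Fin n → F} {i j : Fin n} (h : WB F b u i j) : OWB F b u i j :=
  fun i' hi' => h i' j hi'.le le_rfl fun hij => hi'.ne (congrArg Prod.fst hij)

theorem muWB_le_muOWB (u : Fin n → Fin n → F) (l : ℕ) : muWB F b u l ≤ muOWB F b u l :=
  Set.ncard_le_ncard (fun _ ⟨j, hj, hρ⟩ => ⟨j, hj.owb, hρ⟩) (Set.toFinite _)

end FengRao

theorem stmt11_general {F : Type*} [Field F] {n : ℕ} (b u : Fin n → Fin n → F)
    (hb : IsBasisFam F b)
    (I : Set (Fin n)) :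
    (∀ c : Fin n → F,
        (∀ v ∈ Submodule.span F (b '' I), dotProduct v c = 0) → c ≠ 0 →
        sInf {m : ℕ | ∃ l : Fin n, l ∉ I ∧ m = muOWB F b u ((l : ℕ) + 1)} ≤ hwt c) ∧
    sInf {m : ℕ | ∃ l : Fin n, l ∉ I ∧ m = muWB F b u ((l : ℕ) + 1)} ≤
      sInf {m : ℕ | ∃ l : Fin n, l ∉ I ∧ m = muOWB F b u ((l : ℕ) + 1)} := by
  refine ⟨fun c hc hc0 => ?_, Nat.sInf_le_sInf_of_forall_le fun l => muWB_le_muOWB u _⟩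
  obtain ⟨l, hl, hzero⟩ := exists_first_dotProduct_ne_zero hb.2 hc0
  have hlI : l ∉ I := fun hlI => hl (hc _ (subset_span ⟨l, hlI, rfl⟩))
  exact le_trans (Nat.sInf_le ⟨l, hlI, rfl⟩) (muOWB_succ_le_hwt u hb.2 hl hzero)

theorem stmt11 {F : Type*} [Field F] {n : ℕ} (b u : Fin n → Fin n → F)
    (hb : IsBasisFam F b) (hu : IsBasisFam F u)
    (I : Set (Fin n)) (hI : I.Nonempty) :
    (∀ c : Fin n → F,
        (∀ v ∈ Submodule.span F (b '' I), dotProduct v c = 0) → c ≠ 0 →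
        sInf {m : ℕ | ∃ l : Fin n, l ∉ I ∧ m = muOWB F b u ((l : ℕ) + 1)} ≤ hwt c) ∧
    sInf {m : ℕ | ∃ l : Fin n, l ∉ I ∧ m = muWB F b u ((l : ℕ) + 1)} ≤
      sInf {m : ℕ | ∃ l : Fin n, l ∉ I ∧ m = muOWB F b u ((l : ℕ) + 1)} :=
  stmt11_general b u hb I
end

section
/- Let B = {φ(f_{α(1)}),...,φ(f_{α(n)})} be the basis from the order-domain construction and I ⊆ {1,...,n} nonempty. Then the minimum distance of C(B,I) is at least min{σ(α(i)) : i ∈ I}, and the minimum distance of C^⊥(B,I) is at least min{μ(α(l)) : l ∈ {1,...,n} \ I}, where σ(λ) = #{η ∈ Δ(R,ρ,φ) : η = λ + γ for some γ ∈ Γ} and μ(η) = #{λ ∈ Γ : λ + γ = η for some γ ∈ Γ}. -/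
structure MonOrd (r : ℕ) where
  lt : (Fin r → ℕ) → (Fin r → ℕ) → Prop
  irrefl : ∀ a, ¬ lt a a
  trans : ∀ a b c, lt a b → lt b c → lt a c
  total : ∀ a b, lt a b ∨ a = b ∨ lt b a
  zero_le : ∀ a, a = 0 ∨ lt 0 a
  add_right : ∀ a b c, lt a b → lt (a + c) (b + c)

def MonOrd.wlt {r : ℕ} (mo : MonOrd r)
    (x y : WithBot (Fin r → ℕ)) : Prop :=
  (x = ⊥ ∧ y ≠ ⊥) ∨ ∃ a b : Fin r → ℕ, x = ↑a ∧ y = ↑b ∧ mo.lt a b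

def MonOrd.wle {r : ℕ} (mo : MonOrd r)
    (x y : WithBot (Fin r → ℕ)) : Prop :=
  mo.wlt x y ∨ x = y

structure WeightFunction (Fq R : Type*) [Field Fq] [CommRing R] [Algebra Fq R]
    (r : ℕ) where
  mo : MonOrd r
  Γ : Set (Fin r → ℕ)
  add_mem : ∀ a ∈ Γ, ∀ b ∈ Γ, a + b ∈ Γ
  rho : R → WithBot (Fin r → ℕ)
  surj : ∀ γ ∈ Γ, ∃ f : R, rho f = ↑γ
  mem_Γ : ∀ f : R, rho f ≠ ⊥ → ∃ γ ∈ Γ, rho f = ↑γ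
  W0 : ∀ f : R, rho f = ⊥ ↔ f = 0
  W1 : ∀ (a : Fq) (f : R), a ≠ 0 → rho (a • f) = rho f
  W2a : ∀ f g : R, mo.wle (rho (f + g)) (rho f) ∨ mo.wle (rho (f + g)) (rho g)
  W2b : ∀ f g : R, mo.wlt (rho f) (rho g) → rho (f + g) = rho g
  W3 : ∀ f g h : R, mo.wlt (rho f) (rho g) → h ≠ 0 →
    mo.wlt (rho (f * h)) (rho (g * h))
  W4 : ∀ f g : R, f ≠ 0 → g ≠ 0 → rho f = rho g →
    ∃ a : Fq, a ≠ 0 ∧ mo.wlt (rho (f - a • g)) (rho g)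
  W5 : ∀ f g : R, f ≠ 0 → g ≠ 0 → ∀ γ δ : Fin r → ℕ,
    rho f = ↑γ → rho g = ↑δ → rho (f * g) = ↑(γ + δ)

def Rsub {Fq R : Type*} [Field Fq] [CommRing R] [Algebra Fq R] {r : ℕ}
    (W : WeightFunction Fq R r) (γ : Fin r → ℕ) : Set R :=
  {h : R | W.mo.wle (W.rho h) ↑γ}

def IsJump {Fq R : Type*} [Field Fq] [CommRing R] [Algebra Fq R] {r n : ℕ}
    (W : WeightFunction Fq R r) (φ : R → Fin n → Fq) (η : Fin r → ℕ) : Prop :=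
  η ∈ W.Γ ∧ ∀ γ ∈ W.Γ, W.mo.lt γ η → φ '' Rsub W γ ⊂ φ '' Rsub W η

/-!
Every weight of an element of `R` reduces to the jumps `α j` (by W4 at a jump, and by the
definition of a jump elsewhere), so the `b j = φ (f j)` span `Fq ^ n`, hence form a basis, and
`φ h` with `ρ h = α m` is `a • b m` with `a ≠ 0` plus a combination of the `b j`, `j < m`.

If `0 ≠ c = φ g ∈ C(B, I)` with `ρ g = α i`, pick for every `α i + γ ∈ Δ` some `u` of weight `γ`:
the words `c * φ u = φ (g * u)` vanish off the support of `c` and are independent, because a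
nontrivial combination is `φ (g * U)` with `ρ (g * U) ∈ Δ`, hence nonzero.
If `c ⊥ C(B, I)`, let `l` be the least index with `b l ⬝ᵥ c ≠ 0`; then `l ∉ I` and
`φ h ⬝ᵥ c ≠ 0` whenever `ρ h = α l`. Pick for every `λ + γ = α l` some `u` of weight `λ`: if a
nontrivial combination `U` of these had `c * φ U = 0`, then `w` of weight `α l - ρ U` would give
`φ (U * w) ⬝ᵥ c = 0` although `ρ (U * w) = α l`.
-/

namespace MonOrd

variable {r : ℕ} (mo : MonOrd r)

lemma wlt_bot_coe (γ : Fin r → ℕ) : mo.wlt ⊥ ↑γ := Or.inl ⟨rfl, WithBot.coe_ne_bot⟩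

lemma coe_wlt_coe {a b : Fin r → ℕ} : mo.wlt ↑a ↑b ↔ mo.lt a b := by
  constructor
  · rintro (⟨h, -⟩ | ⟨a', b', ha, hb, h⟩)
    · exact absurd h WithBot.coe_ne_bot
    · rwa [WithBot.coe_inj.1 ha, WithBot.coe_inj.1 hb]
  · exact fun h => Or.inr ⟨a, b, rfl, rfl, h⟩

lemma wlt_trans {x y z : WithBot (Fin r → ℕ)} (hxy : mo.wlt x y) (hyz : mo.wlt y z) :
    mo.wlt x z := by
  rcases hxy with ⟨rfl, hy⟩ | ⟨a, b, rfl, rfl, hab⟩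
  · rcases hyz with ⟨rfl, -⟩ | ⟨c, d, -, rfl, -⟩
    · exact absurd rfl hy
    · exact mo.wlt_bot_coe d
  · rcases hyz with ⟨hb, -⟩ | ⟨c, d, hbc, rfl, hcd⟩
    · exact absurd hb WithBot.coe_ne_bot
    · rw [WithBot.coe_inj.1 hbc] at hab
      exact (mo.coe_wlt_coe).2 (mo.trans _ _ _ hab hcd)

lemma wlt_of_wle_of_wlt {x y z : WithBot (Fin r → ℕ)} (hxy : mo.wle x y) (hyz : mo.wlt y z) :
    mo.wlt x z := by
  rcases hxy with hxy | rfl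
  exacts [mo.wlt_trans hxy hyz, hyz]

lemma wle_trans {x y z : WithBot (Fin r → ℕ)} (hxy : mo.wle x y) (hyz : mo.wle y z) :
    mo.wle x z := by
  rcases hyz with hyz | rfl
  exacts [Or.inl (mo.wlt_of_wle_of_wlt hxy hyz), hxy]

lemma eq_or_lt_of_le {a c : Fin r → ℕ} (h : a ≤ c) : a = c ∨ mo.lt a c := by
  obtain ⟨d, rfl⟩ : ∃ d, c = a + d := ⟨c - a, (add_tsub_cancel_of_le h).symm⟩
  rcases mo.zero_le d with rfl | hd
  · exact Or.inl (add_zero a).symm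
  · simpa [add_comm] using Or.inr (mo.add_right 0 d a hd)

/-- Dickson's lemma makes every monomial order a well-order. -/
lemma wellFounded : WellFounded mo.lt := by
  have : IsStrictOrder (Fin r → ℕ) mo.lt := { irrefl := mo.irrefl, trans := mo.trans }
  refine (RelEmbedding.wellFounded_iff_isEmpty).2 ⟨fun emb => ?_⟩
  obtain ⟨i, j, hij, hle⟩ := Set.partiallyWellOrderedOn_iff_exists_lt.1
    (Set.isPWO_of_wellQuasiOrderedLE Set.univ) (fun k => emb k) (fun _ => Set.mem_univ _)
  have hji : mo.lt (emb j) (emb i) := emb.map_rel_iff.2 hij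
  rcases mo.eq_or_lt_of_le hle with he | hlt
  · exact mo.irrefl _ (he ▸ hji)
  · exact mo.irrefl _ (mo.trans _ _ _ hlt hji)

lemma exists_max (s : Finset (Fin r → ℕ)) (hs : s.Nonempty) :
    ∃ m ∈ s, ∀ x ∈ s, x ≠ m → mo.lt x m := by
  have : IsStrictOrder s fun x y => mo.lt y x :=
    { irrefl := fun x => mo.irrefl x, trans := fun x y z hxy hyz => mo.trans _ _ _ hyz hxy }
  obtain ⟨m, -, hm⟩ := (Finite.wellFounded_of_trans_of_irrefl fun x y : s => mo.lt y x).has_min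
    Set.univ ⟨⟨_, hs.choose_spec⟩, trivial⟩
  refine ⟨m, m.2, fun x hx hxm => ?_⟩
  rcases mo.total x m with h | h | h
  · exact h
  · exact absurd h hxm
  · exact absurd h (hm ⟨x, hx⟩ trivial)

variable {ι : Type*} [LinearOrder ι] {α : ι → Fin r → ℕ}

lemma lt_of_strictMono_of_lt (hα : ∀ i j, i < j → mo.lt (α i) (α j)) {i j : ι}
    (h : mo.lt (α i) (α j)) : i < j := by
  by_contra! hji
  rcases hji.lt_or_eq with hlt | rfl
  · exact mo.irrefl _ (mo.trans _ _ _ h (hα _ _ hlt))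
  · exact mo.irrefl _ h

lemma injective_of_strictMono (hα : ∀ i j, i < j → mo.lt (α i) (α j)) :
    Function.Injective α := by
  intro i j hij
  by_contra hne
  rcases lt_or_gt_of_ne hne with h | h
  · exact mo.irrefl (α j) (hij ▸ hα i j h)
  · exact mo.irrefl (α i) (hij ▸ hα j i h)

end MonOrd

lemma dotProduct_eq_zero_of_mem_span_s15 {F ι : Type*} [Field F] {n : ℕ} {v : ι → Fin n → F}
    {s : Set ι} {c : Fin n → F} (hs : ∀ j ∈ s, v j ⬝ᵥ c = 0) {x : Fin n → F}
    (hx : x ∈ Submodule.span F (v '' s)) : x ⬝ᵥ c = 0 := by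
  have hker : Submodule.span F (v '' s) ≤ LinearMap.ker ((dotProductBilin F F).flip c) :=
    Submodule.span_le.2 (by rintro _ ⟨j, hj, rfl⟩; exact hs j hj)
  exact hker hx

lemma natCard_le_hwt {F ι : Type*} [Field F] {n : ℕ} (c : Fin n → F) (x : ι → Fin n → F)
    (hx : LinearIndependent F fun i => c * x i) : Nat.card ι ≤ hwt c := by
  classical
  let restrict : (Fin n → F) →ₗ[F] ({k // c k ≠ 0} → F) := LinearMap.funLeft F F Subtype.val
  have hdisj :
      Disjoint (Submodule.span F (Set.range fun i => c * x i)) (LinearMap.ker restrict) := by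
    have hspan : Submodule.span F (Set.range fun i => c * x i) ≤
        LinearMap.range (LinearMap.mulLeft F c) :=
      Submodule.span_le.2 (by rintro _ ⟨i, rfl⟩; exact ⟨x i, rfl⟩)
    refine Submodule.disjoint_def.2 fun v hv hker => ?_
    obtain ⟨y, rfl⟩ := hspan hv
    funext k
    by_cases hk : c k = 0
    · simp [hk]
    · exact congrFun hker ⟨k, hk⟩
  have hcard := Cardinal.toNat_le_toNat (hx.map hdisj).cardinalMk_le_finrank
    Cardinal.natCast_lt_aleph0
  rwa [Cardinal.toNat_natCast, Module.finrank_fintype_fun_eq_card, ← Nat.card_eq_fintype_card]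
    at hcard

namespace WeightFunction

variable {Fq R : Type*} [Field Fq] [CommRing R] [Algebra Fq R] {r n : ℕ}
variable (W : WeightFunction Fq R r)

lemma rho_zero : W.rho 0 = ⊥ := (W.W0 0).2 rfl

lemma ne_zero_of_rho_eq_coe {h : R} {γ : Fin r → ℕ} (hγ : W.rho h = ↑γ) : h ≠ 0 := by
  rintro rfl
  exact WithBot.bot_ne_coe (W.rho_zero ▸ hγ)

lemma exists_rho_eq_coe {h : R} (h0 : h ≠ 0) : ∃ γ ∈ W.Γ, W.rho h = ↑γ :=
  W.mem_Γ h (mt (W.W0 h).1 h0)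

lemma mem_Γ_of_rho_eq_coe {h : R} {γ : Fin r → ℕ} (hγ : W.rho h = ↑γ) : γ ∈ W.Γ := by
  obtain ⟨γ', hγ', hγ'h⟩ := W.exists_rho_eq_coe (W.ne_zero_of_rho_eq_coe hγ)
  rwa [WithBot.coe_inj.1 (hγ.symm.trans hγ'h)]

lemma rho_sum_wlt {ι : Type*} (s : Finset ι) (g : ι → R) (v : Fin r → ℕ)
    (h : ∀ j ∈ s, W.mo.wlt (W.rho (g j)) ↑v) : W.mo.wlt (W.rho (∑ j ∈ s, g j)) ↑v := by
  classical
  induction s using Finset.induction_on with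
  | empty => simpa only [Finset.sum_empty, W.rho_zero] using W.mo.wlt_bot_coe v
  | insert a s ha ih =>
    rw [Finset.sum_insert ha]
    rcases W.W2a (g a) (∑ j ∈ s, g j) with h1 | h1
    · exact W.mo.wlt_of_wle_of_wlt h1 (h a (Finset.mem_insert_self a s))
    · exact W.mo.wlt_of_wle_of_wlt h1 (ih fun j hj => h j (Finset.mem_insert_of_mem hj))

lemma rho_sum_eq {ι : Type*} (s : Finset ι) (g : ι → R) (v : Fin r → ℕ) {i : ι} (hi : i ∈ s)
    (hgi : W.rho (g i) = ↑v) (hlt : ∀ j ∈ s, j ≠ i → W.mo.wlt (W.rho (g j)) ↑v) :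
    W.rho (∑ j ∈ s, g j) = ↑v := by
  classical
  have hrest : W.mo.wlt (W.rho (∑ j ∈ s.erase i, g j)) (W.rho (g i)) :=
    hgi ▸ W.rho_sum_wlt _ g v fun j hj =>
      hlt j (Finset.mem_of_mem_erase hj) (Finset.ne_of_mem_erase hj)
  rw [← Finset.add_sum_erase s g hi, add_comm, W.W2b _ _ hrest, hgi]

lemma exists_rho_linearCombination_eq {ι : Type*} (u : ι → R) (w : ι → Fin r → ℕ)
    (hw : Function.Injective w) (hu : ∀ i, W.rho (u i) = ↑(w i)) {t : ι →₀ Fq} (ht : t ≠ 0) :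
    ∃ i ∈ t.support, W.rho (Finsupp.linearCombination Fq u t) = ↑(w i) := by
  classical
  obtain ⟨_, hm, hmax⟩ :=
    W.mo.exists_max (t.support.image w)
      (Finset.image_nonempty.2 (Finsupp.support_nonempty_iff.2 ht))
  obtain ⟨i, hi, rfl⟩ := Finset.mem_image.1 hm
  refine ⟨i, hi, ?_⟩
  rw [Finsupp.linearCombination_apply, Finsupp.sum]
  refine W.rho_sum_eq _ (fun j => t j • u j) _ hi ?_ fun j hj hji => ?_
  · rw [W.W1 _ _ (Finsupp.mem_support_iff.1 hi), hu]
  · rw [W.W1 _ _ (Finsupp.mem_support_iff.1 hj), hu]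
    exact (W.mo.coe_wlt_coe).2 (hmax _ (Finset.mem_image_of_mem w hj) (hw.ne hji))

lemma exists_rho_eq_of_mem_span {M ι : Type*} [AddCommGroup M] [Module Fq M] (φ : R →ₗ[Fq] M)
    {α : ι → Fin r → ℕ} (hα : Function.Injective α) {f : ι → R}
    (hf : ∀ i, W.rho (f i) = ↑(α i)) {I : Set ι} {c : M}
    (hc : c ∈ Submodule.span Fq ((fun j => φ (f j)) '' I)) (hc0 : c ≠ 0) :
    ∃ i ∈ I, ∃ g, W.rho g = ↑(α i) ∧ φ g = c := by
  obtain ⟨t, htI, rfl⟩ := (Finsupp.mem_span_image_iff_linearCombination Fq).1 hc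
  have ht0 : t ≠ 0 := by
    rintro rfl
    exact hc0 (map_zero _)
  obtain ⟨i, hi, hg⟩ := W.exists_rho_linearCombination_eq f α hα hf ht0
  exact ⟨i, htI hi, _, hg, Finsupp.apply_linearCombination Fq φ f t⟩

lemma exists_rho_wlt_of_not_isJump (φ : R → Fin n → Fq) {h : R} {δ : Fin r → ℕ}
    (hδ : W.rho h = ↑δ) (hj : ¬ IsJump W φ δ) : ∃ h', W.mo.wlt (W.rho h') ↑δ ∧ φ h' = φ h := by
  obtain ⟨γ, -, hγδ, hnss⟩ : ∃ γ ∈ W.Γ, W.mo.lt γ δ ∧ ¬ φ '' Rsub W γ ⊂ φ '' Rsub W δ := by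
    simpa [IsJump, W.mem_Γ_of_rho_eq_coe hδ] using hj
  have hsub : φ '' Rsub W γ ⊆ φ '' Rsub W δ :=
    Set.image_mono fun x hx => W.mo.wle_trans hx (Or.inl ((W.mo.coe_wlt_coe).2 hγδ))
  obtain ⟨h', hh', hφ⟩ : φ h ∈ φ '' Rsub W γ := by
    rw [eq_of_subset_of_not_ssubset hsub hnss]
    exact ⟨h, Or.inr hδ, rfl⟩
  exact ⟨h', W.mo.wlt_of_wle_of_wlt hh' ((W.mo.coe_wlt_coe).2 hγδ), hφ⟩

section

variable (φ : R →ₗ[Fq] Fin n → Fq) {α : Fin n → Fin r → ℕ} {f : Fin n → R}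

theorem mem_span_image_wle (hcompl : ∀ η, IsJump W φ η → ∃ i, α i = η)
    (hf : ∀ i, W.rho (f i) = ↑(α i)) (h : R) :
    φ h ∈ Submodule.span Fq ((fun j => φ (f j)) '' {j | W.mo.wle ↑(α j) (W.rho h)}) := by
  suffices key : ∀ (δ : Fin r → ℕ) h, W.rho h = ↑δ →
      φ h ∈ Submodule.span Fq ((fun j => φ (f j)) '' {j | W.mo.wle ↑(α j) ↑δ}) by
    rcases eq_or_ne h 0 with rfl | h0
    · simp
    · obtain ⟨δ, -, hδ⟩ := W.exists_rho_eq_coe h0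
      rw [hδ]
      exact key δ h hδ
  intro δ
  induction δ using W.mo.wellFounded.induction with
  | _ δ ih =>
    intro h hδ
    have hlower : ∀ h', W.mo.wlt (W.rho h') ↑δ →
        φ h' ∈ Submodule.span Fq ((fun j => φ (f j)) '' {j | W.mo.wle ↑(α j) ↑δ}) := by
      intro h' hlt
      rcases eq_or_ne h' 0 with rfl | h0
      · simp
      · obtain ⟨δ', -, hδ'⟩ := W.exists_rho_eq_coe h0
        rw [hδ'] at hlt
        exact Submodule.span_mono
          (Set.image_mono fun j hj => Or.inl (W.mo.wlt_of_wle_of_wlt hj hlt))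
          (ih δ' ((W.mo.coe_wlt_coe).1 hlt) h' hδ')
    by_cases hj : IsJump W φ δ
    · obtain ⟨m, rfl⟩ := hcompl δ hj
      obtain ⟨a, -, hlt⟩ := W.W4 h (f m) (W.ne_zero_of_rho_eq_coe hδ)
        (W.ne_zero_of_rho_eq_coe (hf m)) (hδ.trans (hf m).symm)
      rw [hf m] at hlt
      have hm : φ (f m) ∈ Submodule.span Fq ((fun j => φ (f j)) '' {j | W.mo.wle ↑(α j) ↑(α m)}) :=
        Submodule.subset_span ⟨m, Or.inr rfl, rfl⟩
      simpa using Submodule.add_mem _ (hlower _ hlt) (Submodule.smul_mem _ a hm)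
    · obtain ⟨h', hlt, hφ⟩ := W.exists_rho_wlt_of_not_isJump φ hδ hj
      exact hφ ▸ hlower h' hlt

theorem span_range_apply_eq_top (hφ : Function.Surjective φ)
    (hcompl : ∀ η, IsJump W φ η → ∃ i, α i = η)
    (hf : ∀ i, W.rho (f i) = ↑(α i)) :
    Submodule.span Fq (Set.range fun j => φ (f j)) = ⊤ := by
  refine eq_top_iff.2 fun v _ => ?_
  obtain ⟨h, rfl⟩ := hφ v
  exact Submodule.span_mono (Set.image_subset_range _ _) (W.mem_span_image_wle φ hcompl hf h)

theorem linearIndependent_apply (hφ : Function.Surjective φ)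
    (hcompl : ∀ η, IsJump W φ η → ∃ i, α i = η) (hf : ∀ i, W.rho (f i) = ↑(α i)) :
    LinearIndependent Fq fun j => φ (f j) :=
  linearIndependent_of_top_le_span_of_card_eq_finrank (W.span_range_apply_eq_top φ hφ hcompl hf).ge
    (by simp)

theorem mem_span_lt_of_wlt (hα : ∀ i j, i < j → W.mo.lt (α i) (α j))
    (hcompl : ∀ η, IsJump W φ η → ∃ i, α i = η) (hf : ∀ i, W.rho (f i) = ↑(α i)) {m : Fin n}
    {h : R} (hlt : W.mo.wlt (W.rho h) ↑(α m)) :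
    φ h ∈ Submodule.span Fq ((fun j => φ (f j)) '' {j | j < m}) :=
  Submodule.span_mono (Set.image_mono fun _ hj => W.mo.lt_of_strictMono_of_lt hα
    ((W.mo.coe_wlt_coe).1 (W.mo.wlt_of_wle_of_wlt hj hlt))) (W.mem_span_image_wle φ hcompl hf h)

theorem exists_sub_smul_mem_span_lt (hα : ∀ i j, i < j → W.mo.lt (α i) (α j))
    (hcompl : ∀ η, IsJump W φ η → ∃ i, α i = η) (hf : ∀ i, W.rho (f i) = ↑(α i)) {m : Fin n}
    {h : R} (hm : W.rho h = ↑(α m)) :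
    ∃ a : Fq, a ≠ 0 ∧
      φ h - a • φ (f m) ∈ Submodule.span Fq ((fun j => φ (f j)) '' {j | j < m}) := by
  obtain ⟨a, ha, hlt⟩ := W.W4 h (f m) (W.ne_zero_of_rho_eq_coe hm)
    (W.ne_zero_of_rho_eq_coe (hf m)) (hm.trans (hf m).symm)
  rw [hf m] at hlt
  exact ⟨a, ha, by simpa using W.mem_span_lt_of_wlt φ hα hcompl hf hlt⟩

theorem notMem_span_lt_of_rho_eq (hφ : Function.Surjective φ)
    (hα : ∀ i j, i < j → W.mo.lt (α i) (α j)) (hcompl : ∀ η, IsJump W φ η → ∃ i, α i = η)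
    (hf : ∀ i, W.rho (f i) = ↑(α i)) {m : Fin n} {h : R} (hm : W.rho h = ↑(α m)) :
    φ h ∉ Submodule.span Fq ((fun j => φ (f j)) '' {j | j < m}) := by
  intro hmem
  obtain ⟨a, ha, hsub⟩ := W.exists_sub_smul_mem_span_lt φ hα hcompl hf hm
  have hfm : a • φ (f m) ∈ Submodule.span Fq ((fun j => φ (f j)) '' {j | j < m}) := by
    simpa using sub_mem hmem hsub
  exact (W.linearIndependent_apply φ hφ hcompl hf).notMem_span_image (lt_irrefl m)
    ((Submodule.smul_mem_iff _ ha).1 hfm)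

theorem apply_ne_zero_of_rho_eq (hφ : Function.Surjective φ)
    (hα : ∀ i j, i < j → W.mo.lt (α i) (α j)) (hcompl : ∀ η, IsJump W φ η → ∃ i, α i = η)
    (hf : ∀ i, W.rho (f i) = ↑(α i)) {m : Fin n} {h : R} (hm : W.rho h = ↑(α m)) : φ h ≠ 0 :=
  fun h0 => W.notMem_span_lt_of_rho_eq φ hφ hα hcompl hf hm (h0 ▸ zero_mem _)

theorem exists_notMem_forall_dotProduct_ne_zero (hφ : Function.Surjective φ)
    (hα : ∀ i j, i < j → W.mo.lt (α i) (α j)) (hcompl : ∀ η, IsJump W φ η → ∃ i, α i = η)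
    (hf : ∀ i, W.rho (f i) = ↑(α i)) {I : Set (Fin n)} {c : Fin n → Fq}
    (hc : ∀ v ∈ Submodule.span Fq ((fun j => φ (f j)) '' I), v ⬝ᵥ c = 0) (hc0 : c ≠ 0) :
    ∃ l ∉ I, ∀ h, W.rho h = ↑(α l) → φ h ⬝ᵥ c ≠ 0 := by
  obtain ⟨l, hl, hmin⟩ : ∃ l, φ (f l) ⬝ᵥ c ≠ 0 ∧ ∀ j < l, φ (f j) ⬝ᵥ c = 0 := by
    have hex : ∃ l, φ (f l) ⬝ᵥ c ≠ 0 := by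
      by_contra! hall
      refine hc0 (funext fun k => ?_)
      have hspan : Pi.single k 1 ∈ Submodule.span Fq ((fun j => φ (f j)) '' Set.univ) := by
        rw [Set.image_univ, W.span_range_apply_eq_top φ hφ hcompl hf]
        trivial
      simpa using dotProduct_eq_zero_of_mem_span_s15 (fun j _ => hall j) hspan
    obtain ⟨l, hl, hmin⟩ := wellFounded_lt.has_min _ hex
    exact ⟨l, hl, fun j hj => by_contra fun h => hmin j h hj⟩
  refine ⟨l, fun hlI => hl (hc _ (Submodule.subset_span ⟨l, hlI, rfl⟩)), fun h hh => ?_⟩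
  obtain ⟨a, ha, hsub⟩ := W.exists_sub_smul_mem_span_lt φ hα hcompl hf hh
  have hperp := dotProduct_eq_zero_of_mem_span_s15 hmin hsub
  rw [sub_dotProduct, smul_dotProduct, sub_eq_zero] at hperp
  rw [hperp, smul_eq_mul]
  exact mul_ne_zero ha hl

end

variable (φ : R →ₗ[Fq] Fin n → Fq)

theorem ncard_le_hwt_of_mul_ne_zero (c : Fin n → Fq) {S : Set (Fin r → ℕ)} (hS : S ⊆ W.Γ)
    (hc : ∀ (U : R), ∀ s ∈ S, W.rho U = ↑s → c * φ U ≠ 0) : S.ncard ≤ hwt c := by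
  choose u hu using fun s : S => W.surj s (hS s.2)
  refine natCard_le_hwt c (fun s => φ (u s)) (linearIndependent_iff.2 fun t ht => ?_)
  by_contra t0
  obtain ⟨s, -, hs⟩ := W.exists_rho_linearCombination_eq u Subtype.val Subtype.val_injective hu t0
  refine hc _ s s.2 hs ?_
  rw [← ht]
  exact Finsupp.apply_linearCombination Fq ((LinearMap.mulLeft Fq c).comp φ) u t

theorem ncard_le_hwt_primary (hφmul : ∀ f g : R, φ (f * g) = φ f * φ g) {α : Fin n → Fin r → ℕ}
    (hne : ∀ h m, W.rho h = ↑(α m) → φ h ≠ 0) {g : R} {η₀ : Fin r → ℕ} (hg : W.rho g = ↑η₀) :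
    {η | (∃ l, α l = η) ∧ ∃ γ ∈ W.Γ, η = η₀ + γ}.ncard ≤ hwt (φ g) := by
  have himage : {η | (∃ l, α l = η) ∧ ∃ γ ∈ W.Γ, η = η₀ + γ} =
      (η₀ + ·) '' {γ | γ ∈ W.Γ ∧ ∃ l, α l = η₀ + γ} := by
    ext η
    constructor
    · rintro ⟨⟨l, hl⟩, γ, hγ, rfl⟩
      exact ⟨γ, ⟨hγ, l, hl⟩, rfl⟩
    · rintro ⟨γ, ⟨hγ, l, hl⟩, rfl⟩
      exact ⟨⟨l, hl⟩, γ, hγ, rfl⟩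
  rw [himage, Set.ncard_image_of_injective _ (add_right_injective η₀)]
  refine W.ncard_le_hwt_of_mul_ne_zero φ (φ g) (fun γ hγ => hγ.1) ?_
  rintro U γ ⟨-, l, hl⟩ hU
  rw [← hφmul]
  exact hne _ l (by
    rw [W.W5 g U (W.ne_zero_of_rho_eq_coe hg) (W.ne_zero_of_rho_eq_coe hU) _ _ hg hU, hl])

theorem ncard_le_hwt_dual (hφmul : ∀ f g : R, φ (f * g) = φ f * φ g) (c : Fin n → Fq)
    {η : Fin r → ℕ} (hc : ∀ h, W.rho h = ↑η → φ h ⬝ᵥ c ≠ 0) :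
    {lam | lam ∈ W.Γ ∧ ∃ γ ∈ W.Γ, lam + γ = η}.ncard ≤ hwt c := by
  refine W.ncard_le_hwt_of_mul_ne_zero φ c (fun _ h => h.1) ?_
  rintro U lam ⟨-, γ, hγ, rfl⟩ hU hcU
  obtain ⟨w, hw⟩ := W.surj γ hγ
  refine hc (U * w)
    (W.W5 _ _ (W.ne_zero_of_rho_eq_coe hU) (W.ne_zero_of_rho_eq_coe hw) _ _ hU hw) ?_
  rw [hφmul]
  refine Finset.sum_eq_zero fun k _ => ?_
  have hk : c k * φ U k = 0 := congrFun hcU k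
  simp only [Pi.mul_apply]
  linear_combination φ w k * hk

end WeightFunction

theorem stmt15_general {Fq R : Type*} [Field Fq] [CommRing R] [Algebra Fq R] {r n : ℕ}
    (W : WeightFunction Fq R r) (φ : R → Fin n → Fq)
    (hφsurj : Function.Surjective φ) (hφlin : IsLinearMap Fq φ)
    (hφmul : ∀ f g : R, φ (f * g) = φ f * φ g)
    (α : Fin n → Fin r → ℕ)
    (hmono : ∀ i j : Fin n, i < j → W.mo.lt (α i) (α j))
    (hcompl : ∀ η : Fin r → ℕ, IsJump W φ η → ∃ i : Fin n, α i = η)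
    (f : Fin n → R) (hf : ∀ i : Fin n, W.rho (f i) = ↑(α i))
    (b : Fin n → Fin n → Fq) (hb : ∀ i : Fin n, b i = φ (f i))
    (I : Set (Fin n)) :
    (∀ c ∈ Submodule.span Fq (b '' I), c ≠ 0 →
        sInf {m : ℕ | ∃ i ∈ I, m =
          Set.ncard {η : Fin r → ℕ | (∃ l : Fin n, α l = η) ∧
            ∃ γ ∈ W.Γ, η = α i + γ}} ≤ hwt c) ∧
    (∀ c : Fin n → Fq,
        (∀ v ∈ Submodule.span Fq (b '' I), dotProduct v c = 0) → c ≠ 0 →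
        sInf {m : ℕ | ∃ l : Fin n, l ∉ I ∧ m =
          Set.ncard {lam : Fin r → ℕ | lam ∈ W.Γ ∧
            ∃ γ ∈ W.Γ, lam + γ = α l}} ≤ hwt c) := by
  let φl : R →ₗ[Fq] Fin n → Fq := IsLinearMap.mk' φ hφlin
  obtain rfl : b = fun j => φl (f j) := funext hb
  refine ⟨fun c hc hc0 => ?_, fun c hc hc0 => ?_⟩
  · obtain ⟨i, hi, g, hg, rfl⟩ :=
      W.exists_rho_eq_of_mem_span φl (W.mo.injective_of_strictMono hmono) hf hc hc0
    have hne : ∀ h m, W.rho h = ↑(α m) → φl h ≠ 0 := fun _ _ =>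
      W.apply_ne_zero_of_rho_eq φl hφsurj hmono hcompl hf
    exact le_trans (Nat.sInf_le ⟨i, hi, rfl⟩) (W.ncard_le_hwt_primary φl hφmul hne hg)
  · obtain ⟨l, hl, hlc⟩ :=
      W.exists_notMem_forall_dotProduct_ne_zero φl hφsurj hmono hcompl hf hc hc0
    exact le_trans (Nat.sInf_le ⟨l, hl, rfl⟩) (W.ncard_le_hwt_dual φl hφmul c hlc)

theorem stmt15 {Fq R : Type*} [Field Fq] [CommRing R] [Algebra Fq R] {r n : ℕ}
    (W : WeightFunction Fq R r) (φ : R → Fin n → Fq)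
    (hφsurj : Function.Surjective φ) (hφlin : IsLinearMap Fq φ)
    (hφmul : ∀ f g : R, φ (f * g) = φ f * φ g)
    (α : Fin n → Fin r → ℕ)
    (hα0 : ∀ h0 : 0 < n, α ⟨0, h0⟩ = 0)
    (hmono : ∀ i j : Fin n, i < j → W.mo.lt (α i) (α j))
    (hjump : ∀ i : Fin n, IsJump W φ (α i))
    (hcompl : ∀ η : Fin r → ℕ, IsJump W φ η → ∃ i : Fin n, α i = η)
    (f : Fin n → R) (hf : ∀ i : Fin n, W.rho (f i) = ↑(α i))
    (b : Fin n → Fin n → Fq) (hb : ∀ i : Fin n, b i = φ (f i))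
    (I : Set (Fin n)) (hI : I.Nonempty) :
    (∀ c ∈ Submodule.span Fq (b '' I), c ≠ 0 →
        sInf {m : ℕ | ∃ i ∈ I, m =
          Set.ncard {η : Fin r → ℕ | (∃ l : Fin n, α l = η) ∧
            ∃ γ ∈ W.Γ, η = α i + γ}} ≤ hwt c) ∧
    (∀ c : Fin n → Fq,
        (∀ v ∈ Submodule.span Fq (b '' I), dotProduct v c = 0) → c ≠ 0 →
        sInf {m : ℕ | ∃ l : Fin n, l ∉ I ∧ m =
          Set.ncard {lam : Fin r → ℕ | lam ∈ W.Γ ∧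
            ∃ γ ∈ W.Γ, lam + γ = α l}} ≤ hwt c) :=
  stmt15_general W φ hφsurj hφlin hφmul α hmono hcompl f hf b hb I
end
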